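/- The selection-on-observables bias can be written in partial correlation form: τ_soo − τ = [R_{Y∼U|Z,W_Z,W_Y} · R_{Z∼U|W_Z,W_Y} / sqrt(1 − R²_{Z∼U|W_Z,W_Y})] · sd(Y^{⊥Z,W_Z,W_Y}) / sd(Z^{⊥W_Z,W_Y}). -/

import Mathlib

open Submodule RealInnerProductSpace

/-- Residual of `A` after orthogonal projection onto the span of the finite set `S`
(population linear projection residual `A^{⊥S}`). -/
noncomputable def resid {H : Type*} [NormedAddCommGroup H] [InnerProductSpace ℝ H]
    [CompleteSpace H] (A : H) (S : Set H) (hS : S.Finite) : H :=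
  haveI := hS.to_subtype
  haveI : FiniteDimensional ℝ (span ℝ S) := FiniteDimensional.span_of_finite ℝ hS
  A - (orthogonalProjection (span ℝ S) A : H)

/-- Correlation of two (mean-zero) random variables modeled as Hilbert-space vectors. -/
noncomputable def corr {H : Type*} [NormedAddCommGroup H] [InnerProductSpace ℝ H]
    (a b : H) : ℝ := ⟪a, b⟫ / (‖a‖ * ‖b‖)

/-!
By Frisch–Waugh–Lovell, the coefficient on `X` in a regression on `X` and `S` is
`⟪Y, X^{⊥S}⟫ / ‖X^{⊥S}‖²`. Applied to `Z` in both regressions this gives the omitted-variable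
bias `τ_soo − τ = δ ⟪Z^{⊥W}, U^{⊥W}⟫ / ‖Z^{⊥W}‖²`, where `δ` is the coefficient on `U` and
`W = (W_Z, W_Y)`; applied to `U` in the long regression it gives
`δ = ⟪Y^{⊥Z,W}, U^{⊥Z,W}⟫ / ‖U^{⊥Z,W}‖²`. Finally `U^{⊥Z,W}` is `U^{⊥W}` minus its projection on
`Z^{⊥W}`, so `‖U^{⊥Z,W}‖ = ‖U^{⊥W}‖ √(1 − R²_{Z∼U|W})`.
-/

section InnerProductSpace

variable {E : Type*} [NormedAddCommGroup E] [InnerProductSpace ℝ E]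

lemma inner_eq_zero_of_forall_of_mem_span {e : E} {S : Set E} (h : ∀ x ∈ S, ⟪e, x⟫ = 0) {v : E}
    (hv : v ∈ span ℝ S) : ⟪e, v⟫ = 0 :=
  mem_orthogonal_singleton_iff_inner_right.mp <|
    span_le.mpr (fun x hx ↦ mem_orthogonal_singleton_iff_inner_right.mpr (h x hx)) hv

lemma corr_mul_norm_left (a b : E) : corr a b * ‖a‖ = ⟪a, b⟫ / ‖b‖ := by
  rcases eq_or_ne a 0 with rfl | ha
  · simp [corr]
  · have := norm_ne_zero_iff.mpr ha
    rw [corr]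
    field_simp

lemma one_sub_corr_sq {a b : E} (ha : a ≠ 0) (hb : b ≠ 0) :
    1 - corr a b ^ 2 = (‖a‖ ^ 2 * ‖b‖ ^ 2 - ⟪a, b⟫ ^ 2) / (‖a‖ ^ 2 * ‖b‖ ^ 2) := by
  have := norm_ne_zero_iff.mpr ha
  have := norm_ne_zero_iff.mpr hb
  rw [corr]
  field_simp

end InnerProductSpace

namespace resid

variable {H : Type*} [NormedAddCommGroup H] [InnerProductSpace ℝ H] [CompleteSpace H]
  {S : Set H} (hS : S.Finite)

lemma eq_sub_starProjection (A : H) :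
    haveI := FiniteDimensional.span_of_finite ℝ hS
    resid A S hS = A - (span ℝ S).starProjection A :=
  rfl

lemma sub_mem_span (A : H) : A - resid A S hS ∈ span ℝ S := by
  have := FiniteDimensional.span_of_finite ℝ hS
  rw [eq_sub_starProjection, sub_sub_cancel]
  exact starProjection_apply_mem _ A

lemma mem_orthogonal (A : H) : resid A S hS ∈ (span ℝ S)ᗮ := by
  have := FiniteDimensional.span_of_finite ℝ hS
  exact sub_starProjection_mem_orthogonal A

lemma inner_eq_zero_of_mem_span (A : H) {x : H} (hx : x ∈ span ℝ S) : ⟪x, resid A S hS⟫ = 0 :=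
  inner_right_of_mem_orthogonal hx (mem_orthogonal hS A)

lemma eq_of_sub_mem_span {A r : H} (hmem : A - r ∈ span ℝ S) (horth : ∀ x ∈ S, ⟪r, x⟫ = 0) :
    resid A S hS = r := by
  have := FiniteDimensional.span_of_finite ℝ hS
  have hr : r ∈ (span ℝ S)ᗮ := fun x hx ↦ by
    rw [real_inner_comm]; exact inner_eq_zero_of_forall_of_mem_span horth hx
  rw [eq_sub_starProjection, eq_starProjection_of_mem_orthogonal hmem (by rwa [sub_sub_cancel]),
    sub_sub_cancel]

lemma inner_left (A B : H) : ⟪A, resid B S hS⟫ = ⟪resid A S hS, resid B S hS⟫ := by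
  have := inner_eq_zero_of_mem_span hS B (sub_mem_span hS A)
  rw [inner_sub_left] at this
  linarith

lemma inner_self_left (A : H) : ⟪A, resid A S hS⟫ = ‖resid A S hS‖ ^ 2 := by
  rw [inner_left, real_inner_self_eq_norm_sq]

lemma mem_span_insert (A : H) : resid A S hS ∈ span ℝ (insert A S) := by
  have hA : A ∈ span ℝ (insert A S) := subset_span (Set.mem_insert A S)
  simpa using sub_mem hA (span_mono (Set.subset_insert A S) (sub_mem_span hS A))

lemma inner_eq_mul_norm_sq_of_normal_eq {Y X w : H} {t : ℝ} (hw : w ∈ span ℝ S)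
    (hnormal : ∀ x ∈ insert X S, ⟪Y - (t • X + w), x⟫ = 0) :
    ⟪Y, resid X S hS⟫ = t * ‖resid X S hS‖ ^ 2 := by
  have h := inner_eq_zero_of_forall_of_mem_span hnormal (mem_span_insert hS X)
  rw [inner_sub_left, inner_add_left, real_inner_smul_left, inner_self_left,
    inner_eq_zero_of_mem_span hS X hw] at h
  linarith

lemma omitted_variable_bias {Y X U w₁ w₂ : H} {t₁ t₂ d : ℝ} (hw₁ : w₁ ∈ span ℝ S)
    (hw₂ : w₂ ∈ span ℝ S) (hshort : ∀ x ∈ insert X S, ⟪Y - (t₁ • X + w₁), x⟫ = 0)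
    (hlong : ∀ x ∈ insert U (insert X S), ⟪Y - (t₂ • X + w₂ + d • U), x⟫ = 0) :
    (t₁ - t₂) * ‖resid X S hS‖ ^ 2 = d * ⟪resid X S hS, resid U S hS⟫ := by
  have h₁ := inner_eq_mul_norm_sq_of_normal_eq hS hw₁ hshort
  have h₂ : ⟪Y - d • U, resid X S hS⟫ = t₂ * ‖resid X S hS‖ ^ 2 :=
    inner_eq_mul_norm_sq_of_normal_eq hS hw₂ fun x hx ↦ by
      rw [show Y - d • U - (t₂ • X + w₂) = Y - (t₂ • X + w₂ + d • U) by abel]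
      exact hlong x (Set.mem_insert_of_mem U hx)
  rw [inner_sub_left, real_inner_smul_left, inner_left hS U X,
    real_inner_comm (resid X S hS) (resid U S hS)] at h₂
  linarith

lemma inner_insert_eq_mul_norm_sq_of_normal_eq {Y X U w : H} {t d : ℝ} (hw : w ∈ span ℝ S)
    (hlong : ∀ x ∈ insert U (insert X S), ⟪Y - (t • X + w + d • U), x⟫ = 0) :
    ⟪resid Y (insert X S) (hS.insert X), resid U (insert X S) (hS.insert X)⟫ =
      d * ‖resid U (insert X S) (hS.insert X)‖ ^ 2 := by
  rw [← inner_left]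
  refine inner_eq_mul_norm_sq_of_normal_eq _
    (add_mem (smul_mem _ t (subset_span (Set.mem_insert X S)))
      (span_mono (Set.subset_insert X S) hw)) ?_
  rwa [add_comm (d • U)]

lemma insert_eq_sub_smul (U Z : H) :
    resid U (insert Z S) (hS.insert Z) = resid U S hS -
      (⟪resid U S hS, resid Z S hS⟫ / ‖resid Z S hS‖ ^ 2) • resid Z S hS := by
  apply eq_of_sub_mem_span
  · rw [sub_sub_eq_add_sub, add_sub_right_comm]
    exact add_mem (span_mono (Set.subset_insert Z S) (sub_mem_span hS U))
      (smul_mem _ _ (mem_span_insert hS Z))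
  · rw [Set.forall_mem_insert]
    refine ⟨?_, fun x hx ↦ ?_⟩
    · rw [real_inner_comm, inner_sub_right, real_inner_smul_right, inner_left, inner_self_left,
        real_inner_comm]
      rcases eq_or_ne (resid Z S hS) 0 with hz | hz
      · simp [hz]
      · field_simp [norm_ne_zero_iff.mpr hz]
        ring
    · have hx := subset_span (R := ℝ) hx
      rw [real_inner_comm, inner_sub_right, real_inner_smul_right,
        inner_eq_zero_of_mem_span hS U hx, inner_eq_zero_of_mem_span hS Z hx, mul_zero, sub_zero]

lemma sqrt_one_sub_corr_sq {U Z : H} (hZ : resid Z S hS ≠ 0) (hU : resid U S hS ≠ 0) :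
    √(1 - corr (resid Z S hS) (resid U S hS) ^ 2) =
      ‖resid U (insert Z S) (hS.insert Z)‖ / ‖resid U S hS‖ := by
  have hz := norm_ne_zero_iff.mpr hZ
  have hu := norm_ne_zero_iff.mpr hU
  have hnorm : ‖resid U (insert Z S) (hS.insert Z)‖ ^ 2 * ‖resid Z S hS‖ ^ 2 =
      ‖resid U S hS‖ ^ 2 * ‖resid Z S hS‖ ^ 2 - ⟪resid Z S hS, resid U S hS⟫ ^ 2 := by
    rw [insert_eq_sub_smul hS, norm_sub_sq_real, real_inner_smul_right, norm_smul, mul_pow,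
      Real.norm_eq_abs, sq_abs, real_inner_comm]
    field_simp
    ring
  rw [one_sub_corr_sq hZ hU, ← Real.sqrt_sq (by positivity : 0 ≤ _ / ‖resid U S hS‖)]
  congr 1
  field_simp
  linear_combination -hnorm

end resid

theorem stmt_8_general {H : Type*} [NormedAddCommGroup H] [InnerProductSpace ℝ H] [CompleteSpace H]
    (Y Z U WZ WY : H)
    (hvZ : resid Z {WZ, WY} (Set.toFinite _) ≠ 0)
    (hvU1 : resid U {WZ, WY} (Set.toFinite _) ≠ 0)
    (hvU2 : resid U {Z, WZ, WY} (Set.toFinite _) ≠ 0) :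
    ∀ t1 a1 b1 t2 a2 b2 d2 : ℝ,
      (⟪Y - (t1 • Z + a1 • WZ + b1 • WY), Z⟫ = 0) →
      (⟪Y - (t1 • Z + a1 • WZ + b1 • WY), WZ⟫ = 0) →
      (⟪Y - (t1 • Z + a1 • WZ + b1 • WY), WY⟫ = 0) →
      (⟪Y - (t2 • Z + a2 • WZ + b2 • WY + d2 • U), Z⟫ = 0) →
      (⟪Y - (t2 • Z + a2 • WZ + b2 • WY + d2 • U), WZ⟫ = 0) →
      (⟪Y - (t2 • Z + a2 • WZ + b2 • WY + d2 • U), WY⟫ = 0) →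
      (⟪Y - (t2 • Z + a2 • WZ + b2 • WY + d2 • U), U⟫ = 0) →
      t1 - t2 =
        (corr (resid Y {Z, WZ, WY} (Set.toFinite _)) (resid U {Z, WZ, WY} (Set.toFinite _)) *
         corr (resid Z {WZ, WY} (Set.toFinite _)) (resid U {WZ, WY} (Set.toFinite _)) /
         Real.sqrt (1 -
           (corr (resid Z {WZ, WY} (Set.toFinite _))
             (resid U {WZ, WY} (Set.toFinite _)))^2)) *
        (‖resid Y {Z, WZ, WY} (Set.toFinite _)‖ / ‖resid Z {WZ, WY} (Set.toFinite _)‖) := by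
  intro t1 a1 b1 t2 a2 b2 d2 h1Z h1WZ h1WY h2Z h2WZ h2WY h2U
  have hW (a b : ℝ) : a • WZ + b • WY ∈ span ℝ ({WZ, WY} : Set H) :=
    add_mem (smul_mem _ a (subset_span (by simp))) (smul_mem _ b (subset_span (by simp)))
  rw [add_assoc (t1 • Z)] at h1Z h1WZ h1WY
  rw [add_assoc (t2 • Z)] at h2Z h2WZ h2WY h2U
  have hshort : ∀ x ∈ ({Z, WZ, WY} : Set H), ⟪Y - (t1 • Z + (a1 • WZ + b1 • WY)), x⟫ = 0 := by
    simpa only [Set.forall_mem_insert, Set.mem_singleton_iff, forall_eq] using ⟨h1Z, h1WZ, h1WY⟩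
  have hlong : ∀ x ∈ ({U, Z, WZ, WY} : Set H),
      ⟪Y - (t2 • Z + (a2 • WZ + b2 • WY) + d2 • U), x⟫ = 0 := by
    simpa only [Set.forall_mem_insert, Set.mem_singleton_iff, forall_eq]
      using ⟨h2U, h2Z, h2WZ, h2WY⟩
  have hbias := resid.omitted_variable_bias (Set.toFinite _) (hW a1 b1) (hW a2 b2) hshort hlong
  have hd := resid.inner_insert_eq_mul_norm_sq_of_normal_eq (Set.toFinite _) (hW a2 b2) hlong
  set z := resid Z {WZ, WY} (Set.toFinite _)
  set u₁ := resid U {WZ, WY} (Set.toFinite _)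
  set y := resid Y {Z, WZ, WY} (Set.toFinite _)
  set u₂ := resid U {Z, WZ, WY} (Set.toFinite _)
  have hz := norm_ne_zero_iff.mpr hvZ
  have hu₁ := norm_ne_zero_iff.mpr hvU1
  have hu₂ := norm_ne_zero_iff.mpr hvU2
  rw [resid.sqrt_one_sub_corr_sq _ hvZ hvU1]
  calc t1 - t2 = d2 * ⟪z, u₁⟫ / ‖z‖ ^ 2 := by rw [eq_div_iff (by positivity), hbias]
    _ = corr y u₂ * ‖y‖ * corr z u₁ / (‖u₂‖ / ‖u₁‖) / ‖z‖ := by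
      rw [corr_mul_norm_left, hd, corr]
      field_simp
    _ = _ := by ring

/-- Lemma A.2 (Cinelli–Hazlett formula): the selection-on-observables bias in partial
correlation form,
`τ_soo − τ = [R_{Y∼U|Z,W_Z,W_Y} · R_{Z∼U|W_Z,W_Y} / √(1 − R²_{Z∼U|W_Z,W_Y})]
  · sd(Y^{⊥Z,W_Z,W_Y}) / sd(Z^{⊥W_Z,W_Y})`,
where `τ_soo` (= `t1`) is the coefficient on `Z` in the population regression of `Y` on
`(Z, W_Z, W_Y)` and `τ` (= `t2`) is the coefficient on `Z` in the population regression
of `Y` on `(Z, W_Z, W_Y, U)`, both characterized by the normal equations. -/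
theorem stmt_8 {H : Type*} [NormedAddCommGroup H] [InnerProductSpace ℝ H] [CompleteSpace H]
    (Y Z U WZ WY : H)
    (hli : LinearIndependent ℝ ![Z, WZ, WY, U])
    (hvZ : resid Z {WZ, WY} (Set.toFinite _) ≠ 0)
    (hvU1 : resid U {WZ, WY} (Set.toFinite _) ≠ 0)
    (hvY : resid Y {Z, WZ, WY} (Set.toFinite _) ≠ 0)
    (hvU2 : resid U {Z, WZ, WY} (Set.toFinite _) ≠ 0)
    (hR2 : (corr (resid Z {WZ, WY} (Set.toFinite _)) (resid U {WZ, WY} (Set.toFinite _)))^2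
            < 1) :
    ∀ t1 a1 b1 t2 a2 b2 d2 : ℝ,
      (⟪Y - (t1 • Z + a1 • WZ + b1 • WY), Z⟫ = 0) →
      (⟪Y - (t1 • Z + a1 • WZ + b1 • WY), WZ⟫ = 0) →
      (⟪Y - (t1 • Z + a1 • WZ + b1 • WY), WY⟫ = 0) →
      (⟪Y - (t2 • Z + a2 • WZ + b2 • WY + d2 • U), Z⟫ = 0) →
      (⟪Y - (t2 • Z + a2 • WZ + b2 • WY + d2 • U), WZ⟫ = 0) →
      (⟪Y - (t2 • Z + a2 • WZ + b2 • WY + d2 • U), WY⟫ = 0) →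
      (⟪Y - (t2 • Z + a2 • WZ + b2 • WY + d2 • U), U⟫ = 0) →
      t1 - t2 =
        (corr (resid Y {Z, WZ, WY} (Set.toFinite _)) (resid U {Z, WZ, WY} (Set.toFinite _)) *
         corr (resid Z {WZ, WY} (Set.toFinite _)) (resid U {WZ, WY} (Set.toFinite _)) /
         Real.sqrt (1 -
           (corr (resid Z {WZ, WY} (Set.toFinite _))
             (resid U {WZ, WY} (Set.toFinite _)))^2)) *
        (‖resid Y {Z, WZ, WY} (Set.toFinite _)‖ / ‖resid Z {WZ, WY} (Set.toFinite _)‖) :=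
  stmt_8_general Y Z U WZ WY hvZ hvU1 hvU2
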